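/- (Fractional discrete Poincaré inequality.) Let h>0 and 0<s<1/2. There is a constant C_s>0 depending only on s (independent of h) such that for every finitely supported u:ℤ→ℝ: (h·Σ_{j∈ℤ}|u_j|²)^{1/2} ≤ C_s·h^s·(#supp(u))^s·((h/2)·Σ_{j∈ℤ}Σ_{m∈ℤ, m≠j} |u_j−u_m|²·K_s^h(j−m))^{1/2}, where #supp(u) is the number of j∈ℤ with u_j ≠ 0. -/

import Mathlib

/-!
On a finitely supported `u : ℤ → ℝ` with `N` nonzero values, every `j` has at least `N` zeros
of `u` among the `2N` points `j - 2N, …, j - 1`, and at each of them the kernel is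
`≳ h^(-2s) N^(-1-2s)` (a Gamma-ratio bound from the log-convexity of `Γ`, valid for `s < 1/2`).
Summing the resulting bound `N^(-2s) h^(-2s) u_j² ≲ ∑_m (u_j - u_m)² K(j - m)` over `j` gives
the inequality. The kernel is summable because `Γ(k - s) / Γ(k + 1 + s)` telescopes against
`Γ(k - s) / Γ(k + s)`.
-/

/-- The kernel of the fractional discrete Laplacian on the mesh of size `h`. -/
noncomputable def Ksh (h s : ℝ) (m : ℤ) : ℝ :=
  if m = 0 then 0 else
    ((4 : ℝ) ^ s * Real.Gamma (1/2 + s) / (Real.sqrt Real.pi * (Real.Gamma (1 - s) / s))) *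
      (Real.Gamma (|(m : ℝ)| - s) / (h ^ (2 * s) * Real.Gamma (|(m : ℝ)| + 1 + s)))

open Real Finset

namespace Real

theorem Gamma_add_le_Gamma_mul_rpow {x a : ℝ} (hx : 0 < x) (ha0 : 0 < a) (ha1 : a < 1) :
    Gamma (x + a) ≤ Gamma x * x ^ a := by
  have hG := Gamma_pos_of_pos hx
  calc Gamma (x + a) = Gamma ((1 - a) * x + a * (x + 1)) := by ring_nf
    _ ≤ Gamma x ^ (1 - a) * Gamma (x + 1) ^ a :=
        Gamma_mul_add_mul_le_rpow_Gamma_mul_rpow_Gamma hx (by linarith) (by linarith) ha0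
          (by ring)
    _ = Gamma x * x ^ a := by
        rw [Gamma_add_one hx.ne', mul_rpow hx.le hG.le, ← mul_assoc, mul_right_comm,
          ← rpow_add hG]
        simp

theorem inv_two_mul_rpow_le_Gamma_sub_div_Gamma_add_one_add {s k : ℝ} (hs0 : 0 < s)
    (hs1 : s < 1 / 2) (hk : 1 ≤ k) :
    (2 * k ^ (1 + 2 * s))⁻¹ ≤ Gamma (k - s) / Gamma (k + 1 + s) := by
  have hks : 0 < k - s := by linarith
  have hGks := Gamma_pos_of_pos hks
  have hGk1s := Gamma_pos_of_pos (by linarith : 0 < k + 1 + s)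
  have hshift : Gamma (k + s) ≤ Gamma (k - s) * k ^ (2 * s) :=
    calc Gamma (k + s) = Gamma (k - s + 2 * s) := by ring_nf
      _ ≤ Gamma (k - s) * (k - s) ^ (2 * s) :=
          Gamma_add_le_Gamma_mul_rpow hks (by linarith) (by linarith)
      _ ≤ Gamma (k - s) * k ^ (2 * s) := by gcongr; linarith
  have hrec : Gamma (k + 1 + s) = (k + s) * Gamma (k + s) := by
    rw [add_right_comm, Gamma_add_one (by linarith)]
  rw [le_div_iff₀ hGk1s, inv_mul_le_iff₀ (by positivity), hrec, rpow_add (by linarith),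
    rpow_one]
  calc (k + s) * Gamma (k + s) ≤ (2 * k) * (Gamma (k - s) * k ^ (2 * s)) := by
        gcongr
        linarith
    _ = 2 * (k * k ^ (2 * s)) * Gamma (k - s) := by ring

theorem Gamma_sub_div_Gamma_add_one_add_eq {s k : ℝ} (hs : 0 < s) (hk : s < k) :
    Gamma (k - s) / Gamma (k + 1 + s) =
      (Gamma (k - s) / Gamma (k + s) - Gamma (k + 1 - s) / Gamma (k + 1 + s)) / (2 * s) := by
  have hGks := (Gamma_pos_of_pos (by linarith : 0 < k + s)).ne'
  have hks : k + s ≠ 0 := by linarith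
  rw [add_right_comm, Gamma_add_one (by linarith), add_sub_right_comm,
    Gamma_add_one (by linarith)]
  field_simp
  ring

end Real

noncomputable def kernelConst (s : ℝ) : ℝ :=
  (4 : ℝ) ^ s * Gamma (1/2 + s) / (√π * (Gamma (1 - s) / s))

section Kernel

variable {h s : ℝ}

theorem kernelConst_pos (hs0 : 0 < s) (hs1 : s < 1) : 0 < kernelConst s := by
  have := Gamma_pos_of_pos (by linarith : 0 < 1 / 2 + s)
  have := Gamma_pos_of_pos (by linarith : 0 < 1 - s)
  have := sqrt_pos.2 pi_pos
  unfold kernelConst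
  positivity

theorem Ksh_of_ne_zero {m : ℤ} (hm : m ≠ 0) :
    Ksh h s m = kernelConst s / h ^ (2 * s) *
      (Gamma (|(m : ℝ)| - s) / Gamma (|(m : ℝ)| + 1 + s)) := by
  rw [Ksh, if_neg hm, kernelConst]
  ring

theorem Ksh_neg (m : ℤ) : Ksh h s (-m) = Ksh h s m := by
  simp [Ksh]

theorem Ksh_nonneg (hs0 : 0 < s) (hs1 : s < 1) (hh : 0 ≤ h) (m : ℤ) : 0 ≤ Ksh h s m := by
  rcases eq_or_ne m 0 with rfl | hm
  · simp [Ksh]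
  have hm1 : (1 : ℝ) ≤ |(m : ℝ)| := by exact_mod_cast Int.one_le_abs hm
  have := kernelConst_pos hs0 hs1
  have := Gamma_pos_of_pos (by linarith : 0 < |(m : ℝ)| - s)
  have := Gamma_pos_of_pos (by linarith : 0 < |(m : ℝ)| + 1 + s)
  rw [Ksh_of_ne_zero hm]
  positivity

theorem summable_Gamma_sub_div_Gamma_add_one_add (hs0 : 0 < s) (hs1 : s < 1) :
    Summable fun n : ℕ => Gamma (n + 1 - s) / Gamma (n + 1 + 1 + s) := by
  set f : ℕ → ℝ := fun n => Gamma (n + 1 - s) / Gamma (n + 1 + s)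
  have hf : ∀ n, 0 ≤ f n := fun n =>
    (div_pos (Gamma_pos_of_pos (by linarith)) (Gamma_pos_of_pos (by positivity))).le
  refine summable_of_sum_range_le (c := f 0 / (2 * s))
    (fun n => (div_pos (Gamma_pos_of_pos (by linarith)) (Gamma_pos_of_pos (by positivity))).le)
    fun n => ?_
  have htelescope : ∑ i ∈ range n, Gamma (i + 1 - s) / Gamma (i + 1 + 1 + s) =
      (f 0 - f n) / (2 * s) := by
    rw [← sum_range_sub', sum_div]
    refine sum_congr rfl fun i _ => ?_
    rw [Gamma_sub_div_Gamma_add_one_add_eq hs0 (by linarith)]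
    simp only [f]
    push_cast
    ring_nf
  rw [htelescope]
  gcongr
  linarith [hf n]

theorem summable_Ksh (hs0 : 0 < s) (hs1 : s < 1) (h : ℝ) : Summable (Ksh h s) := by
  have hnat : Summable fun n : ℕ => Ksh h s n := by
    rw [← summable_nat_add_iff 1]
    refine ((summable_Gamma_sub_div_Gamma_add_one_add hs0 hs1).mul_left
      (kernelConst s / h ^ (2 * s))).congr fun n => ?_
    rw [Ksh_of_ne_zero (by omega)]
    push_cast
    rw [abs_of_nonneg (by positivity)]
  exact .of_nat_of_neg hnat (by simpa only [Ksh_neg] using hnat)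

theorem le_Ksh (hs0 : 0 < s) (hs1 : s < 1 / 2) (hh : 0 < h) {m : ℤ} {n : ℝ} (hm : 0 < m)
    (hmn : m ≤ n) : kernelConst s / (2 * h ^ (2 * s) * n ^ (1 + 2 * s)) ≤ Ksh h s m := by
  have hm1 : (1 : ℝ) ≤ m := by exact_mod_cast hm
  have := kernelConst_pos hs0 (by linarith)
  rw [Ksh_of_ne_zero hm.ne', abs_of_pos (by positivity)]
  calc kernelConst s / (2 * h ^ (2 * s) * n ^ (1 + 2 * s))
      = kernelConst s / h ^ (2 * s) * (2 * n ^ (1 + 2 * s))⁻¹ := by ring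
    _ ≤ kernelConst s / h ^ (2 * s) * (2 * (m : ℝ) ^ (1 + 2 * s))⁻¹ := by gcongr
    _ ≤ _ := by
        gcongr
        exact inv_two_mul_rpow_le_Gamma_sub_div_Gamma_add_one_add hs0 hs1 hm1

end Kernel

section KernelPoincare

variable {K u : ℤ → ℝ} {S : Finset ℤ}

theorem summable_sq_sub_mul_kernel (hK : Summable K) (hu : ∀ m ∉ S, u m = 0) (j : ℤ) :
    Summable fun m => (u j - u m) ^ 2 * K (j - m) := by
  refine ((hK.comp_injective (sub_right_injective (b := j))).mul_left (u j ^ 2)).congr_cofinite ?_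
  filter_upwards [S.eventually_cofinite_notMem] with m hm
  simp [hu m hm]

theorem summable_tsum_sq_sub_mul_kernel (hK : Summable K) (hu : ∀ m ∉ S, u m = 0) :
    Summable fun j => ∑' m, (u j - u m) ^ 2 * K (j - m) := by
  have hfar : Summable fun j => ∑ m ∈ S, u m ^ 2 * K (j - m) :=
    summable_sum fun m _ => (hK.comp_injective (sub_left_injective (b := m))).mul_left _
  refine hfar.congr_cofinite ?_
  filter_upwards [S.eventually_cofinite_notMem] with j hj
  rw [hu j hj, tsum_eq_sum (s := S) fun m hm => by simp [hu m hm]]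
  exact sum_congr rfl fun m _ => by ring

theorem card_mul_mul_sq_le_tsum_sq_sub_mul_kernel (hK0 : ∀ m, 0 ≤ K m) (hK : Summable K)
    (hu : ∀ m ∉ S, u m = 0) {κ : ℝ} (hκ0 : 0 ≤ κ)
    (hκ : ∀ m : ℤ, 0 < m → m ≤ 2 * #S → κ ≤ K m) (j : ℤ) :
    #S * κ * u j ^ 2 ≤ ∑' m, (u j - u m) ^ 2 * K (j - m) := by
  have hZ : #S ≤ #(Ico (j - 2 * #S) j \ S) := by
    have := le_card_sdiff S (Ico (j - 2 * #S) j)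
    simp only [Int.card_Ico] at this
    omega
  set Z := Ico (j - 2 * #S) j \ S
  calc #S * κ * u j ^ 2 ≤ #Z * (κ * u j ^ 2) := by
        rw [mul_assoc]
        gcongr
    _ = ∑ m ∈ Z, κ * u j ^ 2 := by rw [sum_const, nsmul_eq_mul]
    _ ≤ ∑ m ∈ Z, (u j - u m) ^ 2 * K (j - m) := by
        refine sum_le_sum fun m hm => ?_
        obtain ⟨hmI, hmS⟩ := mem_sdiff.1 hm
        obtain ⟨hm1, hm2⟩ := mem_Ico.1 hmI
        rw [hu m hmS, sub_zero, mul_comm]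
        exact mul_le_mul_of_nonneg_left (hκ _ (by omega) (by omega)) (sq_nonneg _)
    _ ≤ ∑' m, (u j - u m) ^ 2 * K (j - m) :=
        (summable_sq_sub_mul_kernel hK hu j).sum_le_tsum _
          fun m _ => mul_nonneg (sq_nonneg _) (hK0 _)

theorem card_mul_mul_tsum_sq_le (hK0 : ∀ m, 0 ≤ K m) (hK : Summable K)
    (hu : ∀ m ∉ S, u m = 0) {κ : ℝ} (hκ0 : 0 ≤ κ)
    (hκ : ∀ m : ℤ, 0 < m → m ≤ 2 * #S → κ ≤ K m) :
    #S * κ * ∑' j, u j ^ 2 ≤ ∑' j, ∑' m, (u j - u m) ^ 2 * K (j - m) := by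
  rw [← tsum_mul_left]
  refine Summable.tsum_le_tsum (card_mul_mul_sq_le_tsum_sq_sub_mul_kernel hK0 hK hu hκ0 hκ)
    ?_ (summable_tsum_sq_sub_mul_kernel hK hu)
  refine (summable_of_ne_finset_zero (s := S) fun j hj => ?_).mul_left _
  simp [hu j hj]

end KernelPoincare

theorem rpow_half_le_mul_rpow_half {a b c : ℝ} (hc : 0 ≤ c) (h : a ≤ c ^ 2 * b) :
    a ^ (1 / 2 : ℝ) ≤ c * b ^ (1 / 2 : ℝ) := by
  rw [← sqrt_eq_rpow, ← sqrt_eq_rpow, ← sqrt_sq hc, ← sqrt_mul (sq_nonneg c)]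
  exact sqrt_le_sqrt h

theorem mul_tsum_sq_le_Ksh_energy {h s : ℝ} (hs0 : 0 < s) (hs1 : s < 1 / 2) (hh : 0 < h)
    {u : ℤ → ℝ} {S : Finset ℤ} (hu : ∀ m ∉ S, u m = 0) :
    h * ∑' j, u j ^ 2 ≤ 2 ^ (3 + 2 * s) / kernelConst s * h ^ (2 * s) * (#S : ℝ) ^ (2 * s) *
      (h / 2 * ∑' j, ∑' m, (u j - u m) ^ 2 * Ksh h s (j - m)) := by
  rcases S.eq_empty_or_nonempty with rfl | hS
  · have : ∀ j, u j = 0 := fun j => hu j (notMem_empty j)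
    simp [this]
  have hN : (0 : ℝ) < #S := by exact_mod_cast hS.card_pos
  have hc := kernelConst_pos hs0 (by linarith)
  set κ := kernelConst s / (2 * h ^ (2 * s) * (2 * #S : ℝ) ^ (1 + 2 * s))
  have hsum := card_mul_mul_tsum_sq_le (Ksh_nonneg hs0 (by linarith) hh.le)
    (summable_Ksh hs0 (by linarith) h) hu (κ := κ) (by positivity)
    fun m hm hmS => le_Ksh hs0 hs1 hh hm (by exact_mod_cast hmS)
  have hκ :
      #S * κ * (2 ^ (3 + 2 * s) / kernelConst s * h ^ (2 * s) * (#S : ℝ) ^ (2 * s)) = 2 := by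
    simp only [κ]
    rw [mul_rpow zero_le_two hN.le]
    simp only [rpow_add two_pos, rpow_add hN, rpow_one]
    field_simp
    norm_num
  calc h * ∑' j, u j ^ 2
      = h / 2 * (2 ^ (3 + 2 * s) / kernelConst s * h ^ (2 * s) * (#S : ℝ) ^ (2 * s)) *
          (#S * κ * ∑' j, u j ^ 2) := by linear_combination (-(h / 2) * ∑' j, u j ^ 2) * hκ
    _ ≤ h / 2 * (2 ^ (3 + 2 * s) / kernelConst s * h ^ (2 * s) * (#S : ℝ) ^ (2 * s)) *
          ∑' j, ∑' m, (u j - u m) ^ 2 * Ksh h s (j - m) := by gcongr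
    _ = _ := by ring

/-- Fractional discrete Poincaré inequality. -/
theorem fractional_discrete_Poincare (s : ℝ) (hs0 : 0 < s) (hs1 : s < 1/2) :
    ∃ C : ℝ, 0 < C ∧ ∀ h : ℝ, 0 < h → ∀ u : ℤ → ℝ, (Function.support u).Finite →
      (h * ∑' j : ℤ, |u j| ^ (2 : ℝ)) ^ ((1 : ℝ) / 2) ≤
        C * h ^ s * (Set.ncard (Function.support u) : ℝ) ^ s *
          (h / 2 * ∑' j : ℤ, ∑' m : ℤ,
            |u j - u m| ^ (2 : ℝ) * Ksh h s (j - m)) ^ ((1 : ℝ) / 2) := by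
  have hc := kernelConst_pos hs0 (by linarith)
  refine ⟨√(2 ^ (3 + 2 * s) / kernelConst s), by positivity, fun h hh u hu => ?_⟩
  simp only [rpow_two, sq_abs]
  rw [Set.ncard_eq_toFinset_card _ hu]
  refine rpow_half_le_mul_rpow_half (by positivity) ?_
  have hcoeff : (√(2 ^ (3 + 2 * s) / kernelConst s) * h ^ s * (#hu.toFinset : ℝ) ^ s) ^ 2 =
      2 ^ (3 + 2 * s) / kernelConst s * h ^ (2 * s) * (#hu.toFinset : ℝ) ^ (2 * s) := by
    rw [mul_pow, mul_pow, sq_sqrt (by positivity), ← rpow_mul_natCast hh.le,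
      ← rpow_mul_natCast (Nat.cast_nonneg _)]
    ring_nf
  rw [hcoeff]
  exact mul_tsum_sq_le_Ksh_energy hs0 hs1 hh fun m hm => by simpa using hm
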